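/- Let A ∈ ℝ^{m×n}, q < m/2, and let U be the orthogonal projection onto R = ⋂_{T ⊆ [m], |T| = m−2q} rowspan(A_T). For every (A,q)-robust function G : ℝ^n → Z and every x* ∈ ℝ^n, the set {x ∈ ℝ^n : G(x) = G(x*)} contains the affine subspace x* + ker(U). -/

import Mathlib

open Matrix Finset

noncomputable section

/-- ℓ₀ "norm": the number of nonzero coordinates. -/
def l0 {m : ℕ} (w : Fin m → ℝ) : ℕ := (Finset.univ.filter fun i => w i ≠ 0).card

/-- The row span of the submatrix `A_T` (rows of `A` indexed by `T`), viewed inside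
Euclidean space. -/
def rowspanE {m n : ℕ} (A : Matrix (Fin m) (Fin n) ℝ) (T : Finset (Fin m)) :
    Submodule ℝ (EuclideanSpace ℝ (Fin n)) :=
  Submodule.span ℝ {w : EuclideanSpace ℝ (Fin n) | ∃ i ∈ T, w = A i}

/-- The range (column space) of a square matrix, viewed inside Euclidean space. -/
def rangeE {n : ℕ} (M : Matrix (Fin n) (Fin n) ℝ) : Submodule ℝ (EuclideanSpace ℝ (Fin n)) where
  carrier := {x | ∃ v : EuclideanSpace ℝ (Fin n), M.mulVec v = x}
  zero_mem' := ⟨0, Matrix.mulVec_zero M⟩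
  add_mem' := by
    rintro a b ⟨va, ha⟩ ⟨vb, hb⟩
    exact ⟨va + vb, by simp [Matrix.mulVec_add, ha, hb]⟩
  smul_mem' := by
    rintro c a ⟨v, hv⟩
    exact ⟨c • v, by simp [Matrix.mulVec_smul, hv]⟩

/-!
Robustness makes `G` periodic along every `w` for which `A w` has at most `2q` nonzero entries:
split `A w = e₁ + e₂` into two `q`-sparse errors, so that `A (x + w) - e₁ = A x + e₂`. Every `w`
orthogonal to `rowspan(A_T)` with `|T| = m - 2q` is such a period. Periods form an additive group,
so `G` is periodic along `⨆_T rowspan(A_T)ᗮ = (⨅_T rowspan(A_T))ᗮ = (range U)ᗮ`, and this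
orthogonal complement is `ker U` because `U` is symmetric.
-/

lemma l0_le_card {m : ℕ} {w : Fin m → ℝ} {S : Finset (Fin m)} (hS : ∀ i ∉ S, w i = 0) :
    l0 w ≤ S.card :=
  card_le_card fun i hi => by_contra fun hiS => (mem_filter.mp hi).2 (hS i hiS)

lemma l0_le_of_forall_mem_eq_zero {m : ℕ} {u : Fin m → ℝ} {T : Finset (Fin m)}
    (hT : ∀ i ∈ T, u i = 0) : l0 u ≤ m - T.card := by
  simpa [card_compl] using l0_le_card (S := Tᶜ) fun i hi => hT i (by simpa using hi)

lemma l0_neg {m : ℕ} (w : Fin m → ℝ) : l0 (-w) = l0 w := by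
  simp [l0]

lemma exists_add_eq_of_l0_le_two_mul {m : ℕ} {u : Fin m → ℝ} {q : ℕ} (hu : l0 u ≤ 2 * q) :
    ∃ e₁ e₂ : Fin m → ℝ, l0 e₁ ≤ q ∧ l0 e₂ ≤ q ∧ e₁ + e₂ = u := by
  set S := univ.filter fun i => u i ≠ 0
  obtain ⟨S₁, hS₁S, hS₁card⟩ := exists_subset_card_eq (min_le_right q S.card)
  refine ⟨S₁.piecewise u 0, u - S₁.piecewise u 0, ?_, ?_, add_sub_cancel _ _⟩
  · exact (l0_le_card fun i hi => by simp [hi]).trans (hS₁card.le.trans (min_le_left _ _))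
  · have hsupp : ∀ i ∉ S \ S₁, (u - S₁.piecewise u 0) i = 0 := by
      intro i hi
      by_cases hiS₁ : i ∈ S₁
      · simp [hiS₁]
      · simpa [S, hiS₁] using hi
    have : (S \ S₁).card = S.card - min q S.card := by rw [card_sdiff_of_subset hS₁S, hS₁card]
    have hu' : S.card ≤ 2 * q := hu
    exact (l0_le_card hsupp).trans (by omega)

def IsRobust {m n : ℕ} {Z : Type*} (A : Matrix (Fin m) (Fin n) ℝ) (q : ℕ)
    (G : (Fin n → ℝ) → Z) : Prop :=
  ∀ (x₁ x₂ : Fin n → ℝ) (e₁ e₂ : Fin m → ℝ), l0 e₁ ≤ q → l0 e₂ ≤ q →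
    A *ᵥ x₁ + e₁ = A *ᵥ x₂ + e₂ → G x₁ = G x₂

lemma IsRobust.periodic {m n : ℕ} {Z : Type*} {A : Matrix (Fin m) (Fin n) ℝ} {q : ℕ}
    {G : (Fin n → ℝ) → Z} (hG : IsRobust A q G) {w : Fin n → ℝ} (hw : l0 (A *ᵥ w) ≤ 2 * q) :
    Function.Periodic G w := by
  intro x
  obtain ⟨e₁, e₂, he₁, he₂, hsum⟩ := exists_add_eq_of_l0_le_two_mul hw
  refine hG (x + w) x (-e₁) e₂ ((l0_neg e₁).le.trans he₁) he₂ ?_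
  rw [mulVec_add, ← hsum]
  abel

lemma mulVec_eq_zero_of_mem_orthogonal_rowspanE {m n : ℕ} {A : Matrix (Fin m) (Fin n) ℝ}
    {T : Finset (Fin m)} {w : EuclideanSpace ℝ (Fin n)} (hw : w ∈ (rowspanE A T)ᗮ) :
    ∀ i ∈ T, (A *ᵥ w.ofLp) i = 0 := by
  intro i hi
  have hAi : WithLp.toLp 2 (A i) ∈ rowspanE A T := Submodule.subset_span ⟨i, hi, rfl⟩
  have := Submodule.inner_right_of_mem_orthogonal hAi hw
  simpa [PiLp.inner_apply, mulVec, dotProduct, mul_comm] using this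

lemma IsRobust.periodic_of_mem_orthogonal_rowspanE {m n : ℕ} {Z : Type*}
    {A : Matrix (Fin m) (Fin n) ℝ} {q : ℕ} {G : (Fin n → ℝ) → Z} (hG : IsRobust A q G)
    {T : Finset (Fin m)} (hT : T.card = m - 2 * q) {w : EuclideanSpace ℝ (Fin n)}
    (hw : w ∈ (rowspanE A T)ᗮ) : Function.Periodic G w.ofLp := by
  have hAw := l0_le_of_forall_mem_eq_zero (mulVec_eq_zero_of_mem_orthogonal_rowspanE hw)
  exact hG.periodic (by omega)

lemma toLp_mem_orthogonal_rangeE {n : ℕ} {U : Matrix (Fin n) (Fin n) ℝ} {v : Fin n → ℝ}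
    (hv : Uᵀ *ᵥ v = 0) : WithLp.toLp 2 v ∈ (rangeE U)ᗮ := by
  rw [Submodule.mem_orthogonal]
  rintro u ⟨w, hw⟩
  have : u.ofLp ⬝ᵥ v = 0 := by
    rw [← hw, dotProduct_comm, dotProduct_mulVec, ← mulVec_transpose, hv, zero_dotProduct]
  simpa [PiLp.inner_apply, dotProduct, mul_comm] using this

lemma Submodule.orthogonal_iInf {𝕜 E ι : Type*} [RCLike 𝕜] [NormedAddCommGroup E]
    [InnerProductSpace 𝕜 E] [FiniteDimensional 𝕜 E] (K : ι → Submodule 𝕜 E) :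
    (⨅ i, K i)ᗮ = ⨆ i, (K i)ᗮ := by
  rw [← Submodule.orthogonal_orthogonal (⨆ i, (K i)ᗮ), ← Submodule.iInf_orthogonal]
  simp only [Submodule.orthogonal_orthogonal]

lemma Submodule.periodic_of_mem_iSup {R M Z ι : Type*} [Semiring R] [AddCommMonoid M]
    [Module R M] {K : ι → Submodule R M} {g : M → Z}
    (hK : ∀ i, ∀ w ∈ K i, Function.Periodic g w) {w : M} (hw : w ∈ ⨆ i, K i) :
    Function.Periodic g w :=
  Submodule.iSup_induction K (motive := Function.Periodic g) hw hK (fun _ => by simp)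
    fun _ _ => Function.Periodic.add_period

theorem stmt8_general {m n : ℕ} {Z : Type*} (A : Matrix (Fin m) (Fin n) ℝ) (q : ℕ)
    (U : Matrix (Fin n) (Fin n) ℝ) (hUsymm : U.IsSymm)
    (hUrange : rangeE U = ⨅ T ∈ {T : Finset (Fin m) | T.card = m - 2 * q}, rowspanE A T)
    (G : (Fin n → ℝ) → Z)
    (hG : ∀ (x₁ x₂ : Fin n → ℝ) (e₁ e₂ : Fin m → ℝ), l0 e₁ ≤ q → l0 e₂ ≤ q →
        A.mulVec x₁ + e₁ = A.mulVec x₂ + e₂ → G x₁ = G x₂)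
    (xs : Fin n → ℝ) :
    {x : Fin n → ℝ | ∃ v : Fin n → ℝ, U.mulVec v = 0 ∧ x = xs + v} ⊆
      {x : Fin n → ℝ | G x = G xs} := by
  rintro _ ⟨v, hv, rfl⟩
  have hv' : WithLp.toLp 2 v ∈
      ⨆ T : {T : Finset (Fin m) | T.card = m - 2 * q}, (rowspanE A T)ᗮ := by
    rw [← Submodule.orthogonal_iInf, iInf_subtype'', ← hUrange]
    exact toLp_mem_orthogonal_rangeE (by rwa [hUsymm.eq])
  refine Submodule.periodic_of_mem_iSup (g := G ∘ WithLp.ofLp) (fun T w hw x => ?_) hv'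
    (WithLp.toLp 2 xs)
  exact IsRobust.periodic_of_mem_orthogonal_rowspanE hG T.2 hw x.ofLp

theorem stmt8 {m n : ℕ} {Z : Type*} (A : Matrix (Fin m) (Fin n) ℝ) (q : ℕ) (hq : 2 * q < m)
    (U : Matrix (Fin n) (Fin n) ℝ) (hUsymm : U.IsSymm) (hUidem : U * U = U)
    (hUrange : rangeE U = ⨅ T ∈ {T : Finset (Fin m) | T.card = m - 2 * q}, rowspanE A T)
    (G : (Fin n → ℝ) → Z)
    (hG : ∀ (x₁ x₂ : Fin n → ℝ) (e₁ e₂ : Fin m → ℝ), l0 e₁ ≤ q → l0 e₂ ≤ q →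
        A.mulVec x₁ + e₁ = A.mulVec x₂ + e₂ → G x₁ = G x₂)
    (xs : Fin n → ℝ) :
    {x : Fin n → ℝ | ∃ v : Fin n → ℝ, U.mulVec v = 0 ∧ x = xs + v} ⊆
      {x : Fin n → ℝ | G x = G xs} :=
  stmt8_general A q U hUsymm hUrange G hG xs
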